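/- Let 0 < φ ≤ 1/2 (with φ = ψ/π, 0 < ψ ≤ π/2) and θ > 0. Define h₀(x) = B_{sin²(πx/(2θ))}(φ, 1−φ) for 0 < x ≤ θ. Then the function k(x) = h₀(x)/x^(2φ) is non-increasing on (0, θ]. -/

import Mathlib

/-!
After the substitution `u = π x / (2 θ)` it suffices that `F u / u ^ (2 φ)` is non-increasing on
`(0, π/2]`, where `F u = B_{sin² u}(φ, 1 - φ)`. Since `F 0 = 0` and `F' u = 2 (tan u) ^ (2 φ - 1)`,
the ratio of derivatives `F' u / (u ^ (2 φ))'` is a multiple of `(tan u / u) ^ (2 φ - 1)`, which is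
non-increasing because `tan u / u` increases and `2 φ - 1 ≤ 0`. By the monotone form of
l'Hôpital's rule (Cauchy's mean value theorem on `[0, u]`) the quotient itself is non-increasing.
-/

open Real MeasureTheory Set

/-- The incomplete Beta function `B_x(a,b) = ∫_0^x s^(a-1) (1-s)^(b-1) ds`. -/
noncomputable def incBeta (a b x : ℝ) : ℝ :=
  ∫ s in (0:ℝ)..x, s ^ (a - 1) * (1 - s) ^ (b - 1)

section MonotoneRatio

variable {F f : ℝ → ℝ} {a c : ℝ}

theorem self_mul_le_mul_of_antitoneOn_div_rpow (ha : 0 < a) (hF0 : F 0 = 0)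
    (hFc : ContinuousOn F (Icc 0 c)) (hF : ∀ x ∈ Ioo 0 c, HasDerivAt F (f x) x)
    (hf : AntitoneOn (fun x => f x / x ^ (a - 1)) (Ioo 0 c)) {x : ℝ} (hx : x ∈ Ioo 0 c) :
    x * f x ≤ a * F x := by
  -- Cauchy's mean value theorem gives `F x / x ^ a = f ξ / (a * ξ ^ (a - 1))` for some `ξ < x`.
  obtain ⟨ξ, hξ, hξeq⟩ := exists_ratio_hasDerivAt_eq_ratio_slope F f hx.1
    (hFc.mono (Icc_subset_Icc_right hx.2.le)) (fun y hy => hF y ⟨hy.1, hy.2.trans hx.2⟩)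
    (fun t => t ^ a) (fun t => a * t ^ (a - 1)) (continuousOn_id.rpow_const fun _ _ => Or.inr ha.le)
    (fun y hy => hasDerivAt_rpow_const (Or.inl hy.1.ne'))
  have hξx : f x / x ^ (a - 1) ≤ f ξ / ξ ^ (a - 1) :=
    hf ⟨hξ.1, hξ.2.trans hx.2⟩ hx hξ.2.le
  have hξpos : 0 < ξ ^ (a - 1) := rpow_pos_of_pos hξ.1 _
  have hxpos : 0 < x ^ (a - 1) := rpow_pos_of_pos hx.1 _
  rw [zero_rpow ha.ne', hF0, sub_zero, sub_zero] at hξeq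
  rw [div_le_div_iff₀ hxpos hξpos] at hξx
  have hxa : x ^ a = x * x ^ (a - 1) := by
    rw [rpow_sub_one hx.1.ne', mul_div_cancel₀ _ hx.1.ne']
  have h : x * f x * ξ ^ (a - 1) ≤ a * F x * ξ ^ (a - 1) := by
    rw [hxa] at hξeq
    linear_combination hξeq + mul_le_mul_of_nonneg_left hξx hx.1.le
  exact le_of_mul_le_mul_right h hξpos

theorem antitoneOn_div_rpow_of_antitoneOn_deriv_div_rpow (ha : 0 < a) (hF0 : F 0 = 0)
    (hFc : ContinuousOn F (Icc 0 c)) (hF : ∀ x ∈ Ioo 0 c, HasDerivAt F (f x) x)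
    (hf : AntitoneOn (fun x => f x / x ^ (a - 1)) (Ioo 0 c)) :
    AntitoneOn (fun x => F x / x ^ a) (Ioc 0 c) := by
  have hderiv : ∀ x ∈ Ioo 0 c, HasDerivAt (fun x => F x / x ^ a)
      ((f x * x ^ a - F x * (a * x ^ (a - 1))) / (x ^ a) ^ 2) x := fun x hx =>
    (hF x hx).div (hasDerivAt_rpow_const (Or.inl hx.1.ne')) (rpow_pos_of_pos hx.1 _).ne'
  refine antitoneOn_of_deriv_nonpos (convex_Ioc 0 c) ?_ ?_ ?_
  · exact (hFc.mono Ioc_subset_Icc_self).div (continuousOn_id.rpow_const fun _ _ => Or.inr ha.le)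
      fun x hx => (rpow_pos_of_pos hx.1 _).ne'
  · rw [interior_Ioc]
    exact fun x hx => (hderiv x hx).differentiableAt.differentiableWithinAt
  · rw [interior_Ioc]
    intro x hx
    rw [(hderiv x hx).deriv]
    refine div_nonpos_of_nonpos_of_nonneg ?_ (sq_nonneg _)
    have hxa : x ^ a = x ^ (a - 1) * x := by
      rw [rpow_sub_one hx.1.ne', div_mul_cancel₀ _ hx.1.ne']
    have key := self_mul_le_mul_of_antitoneOn_div_rpow ha hF0 hFc hF hf hx
    rw [hxa]
    linear_combination mul_le_mul_of_nonneg_left key (rpow_pos_of_pos hx.1 (a - 1)).le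

end MonotoneRatio

section IncBeta

variable {a b : ℝ}

theorem intervalIntegrable_betaIntegrand (ha : 0 < a) (hb : 0 < b) :
    IntervalIntegrable (fun s : ℝ => s ^ (a - 1) * (1 - s) ^ (b - 1)) volume 0 1 := by
  refine (Complex.betaIntegral_convergent (u := a) (v := b) (by simpa) (by simpa)).norm.congr
    fun s hs => ?_
  rw [uIoc_of_le zero_le_one] at hs
  have h1s : 0 ≤ 1 - s := sub_nonneg.2 hs.2
  have h_real : (s : ℂ) ^ ((a : ℂ) - 1) * (1 - (s : ℂ)) ^ ((b : ℂ) - 1)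
      = ((s ^ (a - 1) * (1 - s) ^ (b - 1) : ℝ) : ℂ) := by
    push_cast [Complex.ofReal_cpow hs.1.le, Complex.ofReal_cpow h1s]
    rfl
  rw [h_real, Complex.norm_real, Real.norm_of_nonneg
    (mul_nonneg (rpow_nonneg hs.1.le _) (rpow_nonneg h1s _))]

theorem continuousOn_incBeta (ha : 0 < a) (hb : 0 < b) : ContinuousOn (incBeta a b) (Icc 0 1) := by
  have h := intervalIntegral.continuousOn_primitive_interval (μ := volume)
    (f := fun s : ℝ => s ^ (a - 1) * (1 - s) ^ (b - 1)) (a := 0) (b := 1) (by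
      rw [uIcc_of_le zero_le_one]
      exact (intervalIntegrable_iff_integrableOn_Icc_of_le zero_le_one).1
        (intervalIntegrable_betaIntegrand ha hb))
  rwa [uIcc_of_le zero_le_one] at h

theorem hasDerivAt_incBeta (ha : 0 < a) (hb : 0 < b) {t : ℝ} (ht : t ∈ Ioo 0 1) :
    HasDerivAt (incBeta a b) (t ^ (a - 1) * (1 - t) ^ (b - 1)) t := by
  refine intervalIntegral.integral_hasDerivAt_right
    ((intervalIntegrable_betaIntegrand ha hb).mono_set ?_) ?_ ?_
  · rw [uIcc_of_le ht.1.le, uIcc_of_le zero_le_one]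
    exact Icc_subset_Icc_right ht.2.le
  · exact (Measurable.stronglyMeasurable (by fun_prop)).stronglyMeasurableAtFilter
  · exact ((continuousAt_rpow_const _ _ (Or.inl ht.1.ne')).mul
      ((continuousAt_rpow_const _ _ (Or.inl (sub_pos.2 ht.2).ne')).comp
        (continuous_const.sub continuous_id).continuousAt))

end IncBeta

theorem sin_pos_of_mem_Ioo_pi_div_two {v : ℝ} (hv : v ∈ Ioo 0 (π / 2)) : 0 < sin v :=
  sin_pos_of_pos_of_lt_pi hv.1 (by linarith [hv.2, pi_pos])

theorem cos_pos_of_mem_Ioo_pi_div_two {v : ℝ} (hv : v ∈ Ioo 0 (π / 2)) : 0 < cos v :=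
  cos_pos_of_mem_Ioo ⟨by linarith [hv.1, pi_pos], hv.2⟩

theorem sq_rpow_sub_one_mul_self {x : ℝ} (hx : 0 < x) (c : ℝ) :
    (x ^ 2) ^ (c - 1) * x = x ^ (2 * c - 1) := by
  rw [← rpow_natCast, ← rpow_mul hx.le, ← rpow_add_one hx.ne']
  norm_num
  ring_nf

theorem hasDerivAt_incBeta_sin_sq {a b : ℝ} (ha : 0 < a) (hb : 0 < b) {v : ℝ}
    (hv : v ∈ Ioo 0 (π / 2)) :
    HasDerivAt (fun v => incBeta a b (sin v ^ 2)) (2 * sin v ^ (2 * a - 1) * cos v ^ (2 * b - 1))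
      v := by
  have hs := sin_pos_of_mem_Ioo_pi_div_two hv
  have hc := cos_pos_of_mem_Ioo_pi_div_two hv
  have ht : sin v ^ 2 ∈ Ioo 0 1 := ⟨by positivity, by nlinarith [sin_sq_add_cos_sq v]⟩
  refine ((hasDerivAt_incBeta ha hb ht).comp v ((hasDerivAt_sin v).pow 2)).congr_deriv ?_
  rw [← cos_sq', ← sq_rpow_sub_one_mul_self hs, ← sq_rpow_sub_one_mul_self hc]
  push_cast
  ring

theorem monotoneOn_tan_div_self : MonotoneOn (fun v => tan v / v) (Ioo 0 (π / 2)) := by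
  have hderiv : ∀ v ∈ Ioo 0 (π / 2), HasDerivAt (fun v => tan v / v)
      ((1 / cos v ^ 2 * v - tan v * 1) / v ^ 2) v := fun v hv =>
    (hasDerivAt_tan (cos_pos_of_mem_Ioo_pi_div_two hv).ne').div
      (hasDerivAt_id v) hv.1.ne'
  refine monotoneOn_of_deriv_nonneg (convex_Ioo 0 (π / 2)) ?_ ?_ ?_
  · exact fun v hv => (hderiv v hv).continuousAt.continuousWithinAt
  · rw [interior_Ioo]
    exact fun v hv => (hderiv v hv).differentiableAt.differentiableWithinAt
  · rw [interior_Ioo]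
    intro v hv
    have hc := cos_pos_of_mem_Ioo_pi_div_two hv
    have hsc : sin v * cos v ≤ v :=
      (mul_le_of_le_one_right (sin_pos_of_mem_Ioo_pi_div_two hv).le (cos_le_one v)).trans
        (sin_le hv.1.le)
    rw [(hderiv v hv).deriv, tan_eq_sin_div_cos]
    refine div_nonneg ?_ (sq_nonneg _)
    rw [sub_nonneg, mul_one, one_div_mul_eq_div, div_le_div_iff₀ hc (by positivity)]
    linear_combination mul_le_mul_of_nonneg_right hsc hc.le

theorem antitoneOn_incBeta_sin_sq_div_rpow {a : ℝ} (ha : 0 < a) (ha' : a ≤ 1 / 2) :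
    AntitoneOn (fun u => incBeta a (1 - a) (sin u ^ 2) / u ^ (2 * a)) (Ioc 0 (π / 2)) := by
  have hb : 0 < 1 - a := by linarith
  have hg : AntitoneOn (fun v => 2 * (tan v / v) ^ (2 * a - 1)) (Ioo 0 (π / 2)) :=
    fun x hx y hy hxy => mul_le_mul_of_nonneg_left (rpow_le_rpow_of_nonpos
      (div_pos (tan_pos_of_pos_of_lt_pi_div_two hx.1 hx.2) hx.1)
      (monotoneOn_tan_div_self hx hy hxy) (by linarith)) zero_le_two
  refine antitoneOn_div_rpow_of_antitoneOn_deriv_div_rpow (by positivity) (by simp [incBeta])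
    ((continuousOn_incBeta ha hb).comp (continuous_sin.pow 2).continuousOn
      fun v _ => ⟨sq_nonneg _, sin_sq_le_one v⟩)
    (fun v hv => hasDerivAt_incBeta_sin_sq ha hb hv) (hg.congr fun v hv => ?_)
  have hs := sin_pos_of_mem_Ioo_pi_div_two hv
  have hc := cos_pos_of_mem_Ioo_pi_div_two hv
  beta_reduce
  rw [div_rpow (tan_pos_of_pos_of_lt_pi_div_two hv.1 hv.2).le hv.1.le, tan_eq_sin_div_cos,
    div_rpow hs.le hc.le, show 2 * (1 - a) - 1 = -(2 * a - 1) by ring, rpow_neg hc.le]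
  ring

theorem k_antitone (φ θ : ℝ) (hφ : 0 < φ) (hφ' : φ ≤ 1 / 2) (hθ : 0 < θ) :
    AntitoneOn
      (fun x => incBeta φ (1 - φ) (Real.sin (Real.pi * x / (2 * θ)) ^ 2) / x ^ (2 * φ))
      (Set.Ioc 0 θ) := by
  set c := π / (2 * θ) with hc_def
  have hc : 0 < c := by positivity
  have hscale : ∀ x, 0 < x → incBeta φ (1 - φ) (sin (π * x / (2 * θ)) ^ 2) / x ^ (2 * φ)
      = c ^ (2 * φ) * (incBeta φ (1 - φ) (sin (c * x) ^ 2) / (c * x) ^ (2 * φ)) := by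
    intro x hx
    rw [mul_rpow hc.le hx.le, show π * x / (2 * θ) = c * x by ring]
    field_simp
  have hmaps : ∀ x ∈ Ioc 0 θ, c * x ∈ Ioc 0 (π / 2) := fun x hx =>
    ⟨mul_pos hc hx.1, by
      calc c * x ≤ c * θ := mul_le_mul_of_nonneg_left hx.2 hc.le
        _ = π / 2 := by rw [hc_def]; field_simp⟩
  intro x hx y hy hxy
  simp only [hscale x hx.1, hscale y hy.1]
  exact mul_le_mul_of_nonneg_left
    (antitoneOn_incBeta_sin_sq_div_rpow hφ hφ' (hmaps x hx) (hmaps y hy)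
      (mul_le_mul_of_nonneg_left hxy hc.le)) (by positivity)
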